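/- Let T be a connected graded S-ring, P an S-subbimodule, D := T[z]/⟨P*⟩ its central extension, and ann_D(z) the annihilator of the (central, degree 1) element z in D. For each n ∈ ℕ, the Jacobi condition P_{n+1} ∩ T^{≤n} ⊆ P_n holds if and only if the degree-n homogeneous component ann_D(z)^n is zero. In particular, P is of PBW-type if and only if z is a regular element of D. -/

import Mathlib

variable {T : Type*} [Ring T]

/-- Projection onto the degree `n` homogeneous component. -/
noncomputable def projFun (𝒜 : ℕ → AddSubgroup T) [GradedRing 𝒜] (n : ℕ) (x : T) : T :=
  (DirectSum.decompose 𝒜 x n : T)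

lemma projFun_add (𝒜 : ℕ → AddSubgroup T) [GradedRing 𝒜] (n : ℕ) (x y : T) :
    projFun 𝒜 n (x + y) = projFun 𝒜 n x + projFun 𝒜 n y := by
  unfold projFun
  rw [DirectSum.decompose_add, DirectSum.add_apply, AddSubgroup.coe_add]

lemma projFun_neg (𝒜 : ℕ → AddSubgroup T) [GradedRing 𝒜] (n : ℕ) (x : T) :
    projFun 𝒜 n (-x) = - projFun 𝒜 n x := by
  unfold projFun
  rw [DirectSum.decompose_neg, DFinsupp.neg_apply, AddSubgroup.coe_neg]

/-- The `S`-subbimodule `T^{≤ n}` of elements of degree at most `n`. -/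
noncomputable def degLE (𝒜 : ℕ → AddSubgroup T) [GradedRing 𝒜] (n : ℕ) : AddSubgroup T where
  carrier := {x | ∀ m, n < m → projFun 𝒜 m x = 0}
  zero_mem' := by
    intro m hm
    unfold projFun
    rw [DirectSum.decompose_zero, DirectSum.zero_apply, AddSubgroup.coe_zero]
  add_mem' := by
    intro a b ha hb m hm
    rw [projFun_add, ha m hm, hb m hm, add_zero]
  neg_mem' := by
    intro a ha m hm
    rw [projFun_neg, ha m hm, neg_zero]

/-- `y` is the leading homogeneous part of `x`. -/
def IsLH (𝒜 : ℕ → AddSubgroup T) [GradedRing 𝒜] (x y : T) : Prop :=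
  (x = 0 ∧ y = 0) ∨
    ∃ m, y = projFun 𝒜 m x ∧ y ≠ 0 ∧ ∀ k, m < k → projFun 𝒜 k x = 0

/-- `LH(X)`, the set of leading homogeneous parts of elements of `X`. -/
def leadSet (𝒜 : ℕ → AddSubgroup T) [GradedRing 𝒜] (X : Set T) : Set T :=
  {y | ∃ x ∈ X, IsLH 𝒜 x y}

/-- An additive subgroup of `T` which is an `S = T^0`-subbimodule. -/
def IsSubbimodule (𝒜 : ℕ → AddSubgroup T) (X : AddSubgroup T) : Prop :=
  ∀ s ∈ 𝒜 0, ∀ x ∈ X, s * x ∈ X ∧ x * s ∈ X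

/-- `T` is strongly graded: `T^{n+1} = T^1 T^n`. -/
def StronglyGraded (𝒜 : ℕ → AddSubgroup T) : Prop :=
  ∀ n, (𝒜 (n + 1) : Set T) ⊆
    ↑(AddSubgroup.closure {y : T | ∃ a ∈ 𝒜 1, ∃ b ∈ 𝒜 n, y = a * b})

/-- The canonical filtration `P_n = Σ_{i+j+k=n} T^{≤i} P^{≤j} T^{≤k}` of the ideal `⟨P⟩`. -/
noncomputable def Pcan (𝒜 : ℕ → AddSubgroup T) [GradedRing 𝒜] (P : AddSubgroup T) (n : ℕ) :
    AddSubgroup T :=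
  AddSubgroup.closure {x : T | ∃ i j k : ℕ, i + j + k = n ∧
    ∃ a ∈ degLE 𝒜 i, ∃ b ∈ P ⊓ degLE 𝒜 j, ∃ c ∈ degLE 𝒜 k, x = a * b * c}

/-- `T[z]^n`, the degree-`n` component of the graded polynomial ring `T[z]`,
namely `Σ_{i≤n} T^i z^{n-i}`. -/
def TzDeg (𝒜 : ℕ → AddSubgroup T) [GradedRing 𝒜] (n : ℕ) : Set (Polynomial T) :=
  {f | ∀ j : ℕ, (j ≤ n → f.coeff j ∈ 𝒜 (n - j)) ∧ (n < j → f.coeff j = 0)}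

/-- `f` is the external homogenization `a*` of `a`. -/
def IsExtHom (𝒜 : ℕ → AddSubgroup T) [GradedRing 𝒜] (a : T) (f : Polynomial T) : Prop :=
  (a = 0 ∧ f = 0) ∨
    ∃ d : ℕ, projFun 𝒜 d a ≠ 0 ∧ (∀ k, d < k → projFun 𝒜 k a = 0) ∧
      ∀ j : ℕ, f.coeff j = if j ≤ d then projFun 𝒜 (d - j) a else 0

/-- `P* ⊆ T[z]`, the set of external homogenizations of elements of `P`. -/
def starSet (𝒜 : ℕ → AddSubgroup T) [GradedRing 𝒜] (P : Set T) : Set (Polynomial T) :=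
  {f | ∃ a ∈ P, IsExtHom 𝒜 a f}


section Aux

variable (𝒜 : ℕ → AddSubgroup T) [GradedRing 𝒜]

lemma projFun_mem (n : ℕ) (x : T) : projFun 𝒜 n x ∈ 𝒜 n :=
  (DirectSum.decompose 𝒜 x n).2

lemma projFun_zero (n : ℕ) : projFun 𝒜 n (0 : T) = 0 := by
  unfold projFun
  rw [DirectSum.decompose_zero, DirectSum.zero_apply, AddSubgroup.coe_zero]

lemma projFun_sum {ι : Type*} (s : Finset ι) (f : ι → T) (n : ℕ) :
    projFun 𝒜 n (∑ i ∈ s, f i) = ∑ i ∈ s, projFun 𝒜 n (f i) := by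
  classical
  induction s using Finset.induction with
  | empty => simp [projFun_zero]
  | insert a s h ih => simp [Finset.sum_insert h, projFun_add, ih]

lemma projFun_of_mem_same {x : T} {n : ℕ} (h : x ∈ 𝒜 n) : projFun 𝒜 n x = x :=
  DirectSum.decompose_of_mem_same 𝒜 h

lemma projFun_of_mem_ne {x : T} {m n : ℕ} (h : x ∈ 𝒜 m) (hn : m ≠ n) : projFun 𝒜 n x = 0 :=
  DirectSum.decompose_of_mem_ne 𝒜 h hn

lemma projFun_projFun (m n : ℕ) (x : T) :
    projFun 𝒜 n (projFun 𝒜 m x) = if m = n then projFun 𝒜 m x else 0 := by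
  split
  · next h => subst h; exact projFun_of_mem_same 𝒜 (projFun_mem 𝒜 m x)
  · next h => exact projFun_of_mem_ne 𝒜 (projFun_mem 𝒜 m x) h

lemma eq_zero_of_forall_projFun {x : T} (h : ∀ n, projFun 𝒜 n x = 0) : x = 0 := by
  classical
  have hx := DirectSum.sum_support_decompose 𝒜 x
  rw [← hx]
  exact Finset.sum_eq_zero fun i _ => h i

lemma exists_mem_degLE (x : T) : ∃ N, x ∈ degLE 𝒜 N := by
  classical
  refine ⟨(DFinsupp.support (DirectSum.decompose 𝒜 x)).sup id, fun m hm => ?_⟩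
  have : m ∉ DFinsupp.support (DirectSum.decompose 𝒜 x) := by
    intro hmem
    exact absurd (Finset.le_sup (f := id) hmem) (not_le.mpr hm)
  have h0 : DirectSum.decompose 𝒜 x m = 0 := by
    by_contra h
    exact this (DFinsupp.mem_support_iff.mpr h)
  show (DirectSum.decompose 𝒜 x m : T) = 0
  rw [h0]; rfl

lemma sum_projFun {x : T} {n : ℕ} (h : x ∈ degLE 𝒜 n) :
    ∑ t ∈ Finset.range (n + 1), projFun 𝒜 t x = x := by
  classical
  have hx := DirectSum.sum_support_decompose 𝒜 x
  have hsub : DFinsupp.support (DirectSum.decompose 𝒜 x) ⊆ Finset.range (n + 1) := by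
    intro i hi
    rw [Finset.mem_range]
    by_contra hlt
    have : projFun 𝒜 i x = 0 := h i (by omega)
    have h0 : DirectSum.decompose 𝒜 x i = 0 := Subtype.ext this
    exact (DFinsupp.mem_support_iff.mp hi) h0
  calc ∑ t ∈ Finset.range (n + 1), projFun 𝒜 t x
      = ∑ t ∈ DFinsupp.support (DirectSum.decompose 𝒜 x), projFun 𝒜 t x := by
        refine (Finset.sum_subset hsub ?_).symm
        intro i _ hi
        have h0 : DirectSum.decompose 𝒜 x i = 0 := by
          by_contra hne; exact hi (DFinsupp.mem_support_iff.mpr hne)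
        show (DirectSum.decompose 𝒜 x i : T) = 0
        rw [h0]; rfl
    _ = x := hx

lemma mem_degLE_of_mem_graded {x : T} {m n : ℕ} (h : x ∈ 𝒜 m) (hmn : m ≤ n) :
    x ∈ degLE 𝒜 n := fun k hk => projFun_of_mem_ne 𝒜 h (by omega)

lemma projFun_mem_degLE (t : ℕ) (x : T) : projFun 𝒜 t x ∈ degLE 𝒜 t :=
  mem_degLE_of_mem_graded 𝒜 (projFun_mem 𝒜 t x) le_rfl

lemma degLE_mono {m n : ℕ} (h : m ≤ n) : degLE 𝒜 m ≤ degLE 𝒜 n :=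
  fun _ hx k hk => hx k (by omega)

lemma one_mem_degLE : (1 : T) ∈ degLE 𝒜 0 :=
  mem_degLE_of_mem_graded 𝒜 (SetLike.one_mem_graded 𝒜) le_rfl

lemma degLE_mul {x y : T} {m n : ℕ} (hx : x ∈ degLE 𝒜 m) (hy : y ∈ degLE 𝒜 n) :
    x * y ∈ degLE 𝒜 (m + n) := by
  rw [← sum_projFun 𝒜 hx, ← sum_projFun 𝒜 hy, Finset.sum_mul_sum]
  refine AddSubgroup.sum_mem _ fun a ha => AddSubgroup.sum_mem _ fun b hb => ?_
  rw [Finset.mem_range] at ha hb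
  exact mem_degLE_of_mem_graded 𝒜
    (SetLike.mul_mem_graded (projFun_mem 𝒜 a x) (projFun_mem 𝒜 b y)) (by omega)

lemma projFun_mul_left_mem {t : T} {a : ℕ} (ht : t ∈ 𝒜 a) (x : T) (n : ℕ) :
    projFun 𝒜 n (t * x) = if a ≤ n then t * projFun 𝒜 (n - a) x else 0 := by
  classical
  exact DirectSum.coe_decompose_mul_of_left_mem 𝒜 n ht

lemma projFun_mul_right_mem {t : T} {a : ℕ} (ht : t ∈ 𝒜 a) (x : T) (n : ℕ) :
    projFun 𝒜 n (x * t) = if a ≤ n then projFun 𝒜 (n - a) x * t else 0 := by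
  classical
  exact DirectSum.coe_decompose_mul_of_right_mem 𝒜 n ht

lemma projFun_mul_expand_left (t y : T) (e : ℕ) :
    projFun 𝒜 e (t * y) = ∑ a ∈ Finset.range (e + 1), projFun 𝒜 a t * projFun 𝒜 (e - a) y := by
  classical
  obtain ⟨s₀, hs₀⟩ := exists_mem_degLE 𝒜 t
  have hts : t ∈ degLE 𝒜 (max s₀ e) := degLE_mono 𝒜 (le_max_left _ _) hs₀
  set s := max s₀ e with hs
  conv_lhs => rw [← sum_projFun 𝒜 hts, Finset.sum_mul, projFun_sum]
  have he : Finset.range (e + 1) ⊆ Finset.range (s + 1) := by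
    apply Finset.range_subset_range.mpr; omega
  rw [← Finset.sum_subset he]
  · refine Finset.sum_congr rfl fun a ha => ?_
    rw [Finset.mem_range] at ha
    rw [projFun_mul_left_mem 𝒜 (projFun_mem 𝒜 a t) y e, if_pos (by omega)]
  · intro a _ ha
    rw [Finset.mem_range, not_lt] at ha
    rw [projFun_mul_left_mem 𝒜 (projFun_mem 𝒜 a t) y e, if_neg (by omega)]

lemma projFun_mul_expand_right (t y : T) (e : ℕ) :
    projFun 𝒜 e (y * t) = ∑ a ∈ Finset.range (e + 1), projFun 𝒜 (e - a) y * projFun 𝒜 a t := by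
  classical
  obtain ⟨s₀, hs₀⟩ := exists_mem_degLE 𝒜 t
  have hts : t ∈ degLE 𝒜 (max s₀ e) := degLE_mono 𝒜 (le_max_left _ _) hs₀
  set s := max s₀ e with hs
  conv_lhs => rw [← sum_projFun 𝒜 hts, Finset.mul_sum, projFun_sum]
  have he : Finset.range (e + 1) ⊆ Finset.range (s + 1) := by
    apply Finset.range_subset_range.mpr; omega
  rw [← Finset.sum_subset he]
  · refine Finset.sum_congr rfl fun a ha => ?_
    rw [Finset.mem_range] at ha
    rw [projFun_mul_right_mem 𝒜 (projFun_mem 𝒜 a t) y e, if_pos (by omega)]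
  · intro a _ ha
    rw [Finset.mem_range, not_lt] at ha
    rw [projFun_mul_right_mem 𝒜 (projFun_mem 𝒜 a t) y e, if_neg (by omega)]

lemma projFun_top_mul {a b : T} {i j : ℕ} (ha : a ∈ degLE 𝒜 i) (hb : b ∈ degLE 𝒜 j) :
    projFun 𝒜 (i + j) (a * b) = projFun 𝒜 i a * projFun 𝒜 j b := by
  classical
  rw [projFun_mul_expand_left 𝒜 a b (i + j)]
  rw [Finset.sum_eq_single_of_mem i (by rw [Finset.mem_range]; omega)]
  · rw [show i + j - i = j by omega]
  · intro c hc hci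
    rw [Finset.mem_range] at hc
    rcases lt_or_ge i c with h | h
    · rw [ha c (by omega), zero_mul]
    · rw [hb (i + j - c) (by omega), mul_zero]

end Aux


section Aux2

variable (𝒜 : ℕ → AddSubgroup T) [GradedRing 𝒜] (P : AddSubgroup T)

lemma mem_Pcan_gen {a b c : T} {i j k n : ℕ} (hn : i + j + k = n)
    (ha : a ∈ degLE 𝒜 i) (hb : b ∈ P) (hb' : b ∈ degLE 𝒜 j) (hc : c ∈ degLE 𝒜 k) :
    a * b * c ∈ Pcan 𝒜 P n :=
  AddSubgroup.subset_closure ⟨i, j, k, hn, a, ha, b, ⟨hb, hb'⟩, c, hc, rfl⟩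

lemma Pcan_mono {m n : ℕ} (h : m ≤ n) : Pcan 𝒜 P m ≤ Pcan 𝒜 P n := by
  induction n with
  | zero => have : m = 0 := by omega
            subst this; exact le_rfl
  | succ n ih =>
    rcases Nat.lt_or_ge m (n + 1) with h' | h'
    · refine le_trans (ih (by omega)) (AddSubgroup.closure_mono ?_)
      rintro x ⟨i, j, k, hn, a, ha, b, hb, c, hc, rfl⟩
      exact ⟨i + 1, j, k, by omega, a, degLE_mono 𝒜 (by omega) ha, b, hb, c, hc, rfl⟩
    · have : m = n + 1 := by omega
      subst this; exact le_rfl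

lemma mem_Pcan_of_mem_P {b : T} {j : ℕ} (hb : b ∈ P) (hb' : b ∈ degLE 𝒜 j) :
    b ∈ Pcan 𝒜 P j := by
  have := mem_Pcan_gen 𝒜 P (show 0 + j + 0 = j by omega)
    (one_mem_degLE 𝒜) hb hb' (one_mem_degLE 𝒜)
  simpa using this

lemma degLE_mul_Pcan {u x : T} {s m : ℕ} (hu : u ∈ degLE 𝒜 s) (hx : x ∈ Pcan 𝒜 P m) :
    u * x ∈ Pcan 𝒜 P (s + m) := by
  induction hx using AddSubgroup.closure_induction with
  | mem y hy =>
    obtain ⟨i, j, k, hn, a, ha, b, hb, c, hc, rfl⟩ := hy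
    rw [show u * (a * b * c) = (u * a) * b * c by simp [mul_assoc]]
    exact mem_Pcan_gen 𝒜 P (show (s + i) + j + k = s + m by omega)
      (degLE_mul 𝒜 hu ha) hb.1 hb.2 hc
  | zero => rw [mul_zero]; exact zero_mem _
  | add y z _ _ hy hz => rw [mul_add]; exact add_mem hy hz
  | neg y _ hy => rw [mul_neg]; exact neg_mem hy

lemma Pcan_mul_degLE {u x : T} {s m : ℕ} (hu : u ∈ degLE 𝒜 s) (hx : x ∈ Pcan 𝒜 P m) :
    x * u ∈ Pcan 𝒜 P (m + s) := by
  induction hx using AddSubgroup.closure_induction with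
  | mem y hy =>
    obtain ⟨i, j, k, hn, a, ha, b, hb, c, hc, rfl⟩ := hy
    rw [show (a * b * c) * u = a * b * (c * u) by simp [mul_assoc]]
    exact mem_Pcan_gen 𝒜 P (show i + j + (k + s) = m + s by omega)
      ha hb.1 hb.2 (degLE_mul 𝒜 hc hu)
  | zero => rw [zero_mul]; exact zero_mem _
  | add y z _ _ hy hz => rw [add_mul]; exact add_mem hy hz
  | neg y _ hy => rw [neg_mul]; exact neg_mem hy

end Aux2


section Aux3

open Polynomial

variable (𝒜 : ℕ → AddSubgroup T) [GradedRing 𝒜]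

/-- Homogenization of `x` to degree `n` in `T[z]`. -/
noncomputable def hmz (n : ℕ) (x : T) : Polynomial T :=
  ∑ j ∈ Finset.range (n + 1), Polynomial.monomial j (projFun 𝒜 (n - j) x)

lemma coeff_hmz (n : ℕ) (x : T) (j : ℕ) :
    (hmz 𝒜 n x).coeff j = if j ≤ n then projFun 𝒜 (n - j) x else 0 := by
  classical
  rw [hmz, Polynomial.finset_sum_coeff]
  simp only [Polynomial.coeff_monomial]
  rw [Finset.sum_ite_eq' (Finset.range (n + 1)) j]
  simp [Nat.lt_succ_iff]

lemma hmz_add (n : ℕ) (x y : T) : hmz 𝒜 n (x + y) = hmz 𝒜 n x + hmz 𝒜 n y := by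
  unfold hmz
  rw [← Finset.sum_add_distrib]
  exact Finset.sum_congr rfl fun j _ => by rw [projFun_add, map_add]

lemma hmz_zero (n : ℕ) : hmz 𝒜 n (0 : T) = 0 := by
  simp [hmz, projFun_zero]

lemma hmz_neg (n : ℕ) (x : T) : hmz 𝒜 n (-x) = - hmz 𝒜 n x := by
  unfold hmz
  rw [← Finset.sum_neg_distrib]
  exact Finset.sum_congr rfl fun j _ => by rw [projFun_neg, map_neg]

lemma hmz_sum {ι : Type*} (s : Finset ι) (f : ι → T) (n : ℕ) :
    hmz 𝒜 n (∑ i ∈ s, f i) = ∑ i ∈ s, hmz 𝒜 n (f i) := by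
  classical
  induction s using Finset.induction with
  | empty => simp [hmz_zero]
  | insert a s h ih => simp [Finset.sum_insert h, hmz_add, ih]

lemma hmz_mem_TzDeg (n : ℕ) (x : T) : hmz 𝒜 n x ∈ TzDeg 𝒜 n := by
  intro j
  constructor
  · intro hj; rw [coeff_hmz, if_pos hj]; exact projFun_mem 𝒜 _ x
  · intro hj; rw [coeff_hmz, if_neg (by omega)]

lemma hmz_of_mem_graded {x : T} {a n : ℕ} (hx : x ∈ 𝒜 a) (han : a ≤ n) :
    hmz 𝒜 n x = Polynomial.monomial (n - a) x := by
  ext j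
  rw [coeff_hmz, Polynomial.coeff_monomial]
  by_cases hj : j ≤ n
  · rw [if_pos hj]
    by_cases hja : n - a = j
    · rw [if_pos hja, show n - j = a by omega, projFun_of_mem_same 𝒜 hx]
    · rw [if_neg hja, projFun_of_mem_ne 𝒜 hx (by omega)]
  · rw [if_neg hj, if_neg (by omega)]

lemma hmz_mul {x y : T} {m n : ℕ} (hx : x ∈ degLE 𝒜 m) (hy : y ∈ degLE 𝒜 n) :
    hmz 𝒜 (m + n) (x * y) = hmz 𝒜 m x * hmz 𝒜 n y := by
  conv_lhs => rw [← sum_projFun 𝒜 hx, ← sum_projFun 𝒜 hy, Finset.sum_mul_sum]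
  conv_rhs => rw [← sum_projFun 𝒜 hx, ← sum_projFun 𝒜 hy]
  rw [hmz_sum, hmz_sum, hmz_sum, Finset.sum_mul_sum]
  refine Finset.sum_congr rfl fun a ha => ?_
  rw [hmz_sum]
  refine Finset.sum_congr rfl fun b hb => ?_
  rw [Finset.mem_range] at ha hb
  rw [hmz_of_mem_graded 𝒜
        (SetLike.mul_mem_graded (projFun_mem 𝒜 a x) (projFun_mem 𝒜 b y))
        (show a + b ≤ m + n by omega),
      hmz_of_mem_graded 𝒜 (projFun_mem 𝒜 a x) (by omega),
      hmz_of_mem_graded 𝒜 (projFun_mem 𝒜 b y) (by omega),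
      Polynomial.monomial_mul_monomial,
      show m + n - (a + b) = m - a + (n - b) by omega]

lemma X_mul_hmz {x : T} {n : ℕ} (hx : x ∈ degLE 𝒜 n) :
    hmz 𝒜 (n + 1) x = Polynomial.X * hmz 𝒜 n x := by
  ext j
  rw [coeff_hmz]
  cases j with
  | zero =>
    rw [Polynomial.mul_coeff_zero, Polynomial.coeff_X_zero, zero_mul, if_pos (by omega)]
    exact hx (n + 1) (by omega)
  | succ j =>
    rw [Polynomial.coeff_X_mul, coeff_hmz]
    by_cases hj : j ≤ n
    · rw [if_pos (by omega), if_pos hj, show n + 1 - (j + 1) = n - j by omega]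
    · rw [if_neg (by omega), if_neg hj]

lemma X_pow_mul_hmz {x : T} {d : ℕ} (hx : x ∈ degLE 𝒜 d) (m : ℕ) :
    hmz 𝒜 (d + m) x = Polynomial.X ^ m * hmz 𝒜 d x := by
  induction m with
  | zero => simp
  | succ m ih =>
    rw [show d + (m + 1) = (d + m) + 1 by omega,
      X_mul_hmz 𝒜 (degLE_mono 𝒜 (by omega) hx), ih, ← mul_assoc, ← pow_succ']

/-- The degree-`n` "dehomogenized component" of a polynomial. -/
noncomputable def dh (n : ℕ) (f : Polynomial T) : T :=
  ∑ j ∈ Finset.range (n + 1), projFun 𝒜 (n - j) (f.coeff j)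

lemma dh_add (n : ℕ) (f g : Polynomial T) : dh 𝒜 n (f + g) = dh 𝒜 n f + dh 𝒜 n g := by
  unfold dh
  rw [← Finset.sum_add_distrib]
  exact Finset.sum_congr rfl fun j _ => by rw [Polynomial.coeff_add, projFun_add]

lemma dh_zero (n : ℕ) : dh 𝒜 n (0 : Polynomial T) = 0 := by
  simp [dh, projFun_zero]

lemma dh_neg (n : ℕ) (f : Polynomial T) : dh 𝒜 n (-f) = - dh 𝒜 n f := by
  unfold dh
  rw [← Finset.sum_neg_distrib]
  exact Finset.sum_congr rfl fun j _ => by rw [Polynomial.coeff_neg, projFun_neg]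

lemma dh_sum {ι : Type*} (s : Finset ι) (f : ι → Polynomial T) (n : ℕ) :
    dh 𝒜 n (∑ i ∈ s, f i) = ∑ i ∈ s, dh 𝒜 n (f i) := by
  classical
  induction s using Finset.induction with
  | empty => simp [dh_zero]
  | insert a s h ih => simp [Finset.sum_insert h, dh_add, ih]

lemma dh_mem_degLE (n : ℕ) (f : Polynomial T) : dh 𝒜 n f ∈ degLE 𝒜 n :=
  AddSubgroup.sum_mem _ fun j _ =>
    mem_degLE_of_mem_graded 𝒜 (projFun_mem 𝒜 _ _) (by omega)

lemma dh_hmz {x : T} {n : ℕ} (hx : x ∈ degLE 𝒜 n) : dh 𝒜 n (hmz 𝒜 n x) = x := by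
  unfold dh
  calc ∑ j ∈ Finset.range (n + 1), projFun 𝒜 (n - j) ((hmz 𝒜 n x).coeff j)
      = ∑ j ∈ Finset.range (n + 1), projFun 𝒜 (n - j) x := by
        refine Finset.sum_congr rfl fun j hj => ?_
        rw [Finset.mem_range] at hj
        rw [coeff_hmz, if_pos (by omega), projFun_projFun, if_pos rfl]
    _ = ∑ j ∈ Finset.range (n + 1), projFun 𝒜 j x := by
        have := Finset.sum_range_reflect (fun t => projFun 𝒜 t x) (n + 1)
        simpa using this
    _ = x := sum_projFun 𝒜 hx

lemma coeff_hmz_dh (n : ℕ) (f : Polynomial T) (j : ℕ) :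
    (hmz 𝒜 n (dh 𝒜 n f)).coeff j = if j ≤ n then projFun 𝒜 (n - j) (f.coeff j) else 0 := by
  rw [coeff_hmz]
  by_cases hj : j ≤ n
  · rw [if_pos hj, if_pos hj]
    unfold dh
    rw [projFun_sum]
    rw [Finset.sum_eq_single_of_mem j (by rw [Finset.mem_range]; omega)]
    · rw [projFun_projFun, if_pos rfl]
    · intro e he hej
      rw [Finset.mem_range] at he
      rw [projFun_projFun, if_neg (by omega)]
  · rw [if_neg hj, if_neg hj]

lemma hmz_dh_of_TzDeg {f : Polynomial T} {n : ℕ} (hf : f ∈ TzDeg 𝒜 n) :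
    hmz 𝒜 n (dh 𝒜 n f) = f := by
  ext j
  rw [coeff_hmz_dh]
  by_cases hj : j ≤ n
  · rw [if_pos hj, projFun_of_mem_same 𝒜 ((hf j).1 hj)]
  · rw [if_neg hj, (hf j).2 (by omega)]

lemma dh_of_TzDeg_ne {f : Polynomial T} {m n : ℕ} (hf : f ∈ TzDeg 𝒜 n) (hmn : m ≠ n) :
    dh 𝒜 m f = 0 := by
  unfold dh
  refine Finset.sum_eq_zero fun j hj => ?_
  rw [Finset.mem_range] at hj
  by_cases hjn : j ≤ n
  · exact projFun_of_mem_ne 𝒜 ((hf j).1 hjn) (by omega)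
  · rw [(hf j).2 (by omega), projFun_zero]

lemma X_mul_mem_TzDeg {f : Polynomial T} {n : ℕ} (hf : f ∈ TzDeg 𝒜 n) :
    Polynomial.X * f ∈ TzDeg 𝒜 (n + 1) := by
  intro j
  cases j with
  | zero =>
    constructor
    · intro _
      rw [Polynomial.mul_coeff_zero, Polynomial.coeff_X_zero, zero_mul]
      exact zero_mem _
    · intro h; omega
  | succ j =>
    rw [Polynomial.coeff_X_mul]
    constructor
    · intro hj
      rw [show n + 1 - (j + 1) = n - j by omega]
      exact (hf j).1 (by omega)
    · intro hj
      exact (hf j).2 (by omega)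

lemma dh_X_mul_succ (n : ℕ) (f : Polynomial T) :
    dh 𝒜 (n + 1) (Polynomial.X * f) = dh 𝒜 n f := by
  unfold dh
  rw [Finset.sum_range_succ']
  rw [Polynomial.mul_coeff_zero, Polynomial.coeff_X_zero, zero_mul, projFun_zero, add_zero]
  exact Finset.sum_congr rfl fun j _ => by
    rw [Polynomial.coeff_X_mul, show n + 1 - (j + 1) = n - j by omega]

lemma dh_zero_X_mul (f : Polynomial T) : dh 𝒜 0 (Polynomial.X * f) = 0 := by
  unfold dh
  rw [Finset.sum_range_one, Polynomial.mul_coeff_zero, Polynomial.coeff_X_zero, zero_mul,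
    projFun_zero]

lemma dh_mul_X_succ (n : ℕ) (f : Polynomial T) :
    dh 𝒜 (n + 1) (f * Polynomial.X) = dh 𝒜 n f := by
  unfold dh
  rw [Finset.sum_range_succ']
  rw [Polynomial.mul_coeff_zero, Polynomial.coeff_X_zero, mul_zero, projFun_zero, add_zero]
  exact Finset.sum_congr rfl fun j _ => by
    rw [Polynomial.coeff_mul_X, show n + 1 - (j + 1) = n - j by omega]

lemma dh_zero_mul_X (f : Polynomial T) : dh 𝒜 0 (f * Polynomial.X) = 0 := by
  unfold dh
  rw [Finset.sum_range_one, Polynomial.mul_coeff_zero, Polynomial.coeff_X_zero, mul_zero,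
    projFun_zero]

lemma dh_C_mul_mem {t : T} {a : ℕ} (ht : t ∈ 𝒜 a) (f : Polynomial T) (n : ℕ) :
    dh 𝒜 n (Polynomial.C t * f) = if a ≤ n then t * dh 𝒜 (n - a) f else 0 := by
  classical
  unfold dh
  by_cases han : a ≤ n
  · rw [if_pos han, Finset.mul_sum]
    calc ∑ j ∈ Finset.range (n + 1), projFun 𝒜 (n - j) ((Polynomial.C t * f).coeff j)
        = ∑ j ∈ Finset.range (n + 1),
            (if a ≤ n - j then t * projFun 𝒜 (n - j - a) (f.coeff j) else 0) := by
          exact Finset.sum_congr rfl fun j _ => by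
            rw [Polynomial.coeff_C_mul, projFun_mul_left_mem 𝒜 ht]
      _ = ∑ j ∈ Finset.range (n - a + 1),
            (if a ≤ n - j then t * projFun 𝒜 (n - j - a) (f.coeff j) else 0) := by
          refine (Finset.sum_subset (Finset.range_subset_range.mpr (by omega)) ?_).symm
          intro j hj hj'
          rw [Finset.mem_range] at hj hj'
          rw [if_neg (by omega)]
      _ = ∑ j ∈ Finset.range (n - a + 1), t * projFun 𝒜 (n - a - j) (f.coeff j) := by
          refine Finset.sum_congr rfl fun j hj => ?_
          rw [Finset.mem_range] at hj
          rw [if_pos (by omega), show n - j - a = n - a - j by omega]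
  · rw [if_neg han]
    refine Finset.sum_eq_zero fun j hj => ?_
    rw [Finset.mem_range] at hj
    rw [Polynomial.coeff_C_mul, projFun_mul_left_mem 𝒜 ht, if_neg (by omega)]

lemma dh_mul_C_mem {t : T} {a : ℕ} (ht : t ∈ 𝒜 a) (f : Polynomial T) (n : ℕ) :
    dh 𝒜 n (f * Polynomial.C t) = if a ≤ n then dh 𝒜 (n - a) f * t else 0 := by
  classical
  unfold dh
  by_cases han : a ≤ n
  · rw [if_pos han, Finset.sum_mul]
    calc ∑ j ∈ Finset.range (n + 1), projFun 𝒜 (n - j) ((f * Polynomial.C t).coeff j)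
        = ∑ j ∈ Finset.range (n + 1),
            (if a ≤ n - j then projFun 𝒜 (n - j - a) (f.coeff j) * t else 0) := by
          exact Finset.sum_congr rfl fun j _ => by
            rw [Polynomial.coeff_mul_C, projFun_mul_right_mem 𝒜 ht]
      _ = ∑ j ∈ Finset.range (n - a + 1),
            (if a ≤ n - j then projFun 𝒜 (n - j - a) (f.coeff j) * t else 0) := by
          refine (Finset.sum_subset (Finset.range_subset_range.mpr (by omega)) ?_).symm
          intro j hj hj'
          rw [Finset.mem_range] at hj hj'
          rw [if_neg (by omega)]
      _ = ∑ j ∈ Finset.range (n - a + 1), projFun 𝒜 (n - a - j) (f.coeff j) * t := by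
          refine Finset.sum_congr rfl fun j hj => ?_
          rw [Finset.mem_range] at hj
          rw [if_pos (by omega), show n - j - a = n - a - j by omega]
  · rw [if_neg han]
    refine Finset.sum_eq_zero fun j hj => ?_
    rw [Finset.mem_range] at hj
    rw [Polynomial.coeff_mul_C, projFun_mul_right_mem 𝒜 ht, if_neg (by omega)]

end Aux3


section Aux4

open Polynomial

variable (𝒜 : ℕ → AddSubgroup T) [GradedRing 𝒜] (P : AddSubgroup T)

lemma exists_top {x : T} (hx : x ≠ 0) :
    ∃ d, projFun 𝒜 d x ≠ 0 ∧ ∀ k, d < k → projFun 𝒜 k x = 0 := by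
  classical
  have hne : (DFinsupp.support (DirectSum.decompose 𝒜 x)).Nonempty := by
    rw [Finset.nonempty_iff_ne_empty]
    intro h
    apply hx
    have := DirectSum.sum_support_decompose 𝒜 x
    rw [h, Finset.sum_empty] at this
    exact this.symm
  refine ⟨(DFinsupp.support (DirectSum.decompose 𝒜 x)).max' hne, ?_, ?_⟩
  · have hmem := (DFinsupp.support (DirectSum.decompose 𝒜 x)).max'_mem hne
    rw [DFinsupp.mem_support_iff] at hmem
    intro h
    exact hmem (Subtype.ext h)
  · intro k hk
    have : k ∉ DFinsupp.support (DirectSum.decompose 𝒜 x) := by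
      intro hmem
      exact absurd (Finset.le_max' _ _ hmem) (by omega)
    have h0 : DirectSum.decompose 𝒜 x k = 0 := by
      by_contra h; exact this (DFinsupp.mem_support_iff.mpr h)
    show (DirectSum.decompose 𝒜 x k : T) = 0
    rw [h0]; rfl

lemma hmz_mem_span_of_mem_P {b : T} {j : ℕ} (hb : b ∈ P) (hb' : b ∈ degLE 𝒜 j) :
    hmz 𝒜 j b ∈ TwoSidedIdeal.span (starSet 𝒜 (P : Set T)) := by
  by_cases hbz : b = 0
  · subst hbz; rw [hmz_zero]; exact zero_mem _
  obtain ⟨d, hd, hd2⟩ := exists_top 𝒜 hbz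
  have hdj : d ≤ j := by by_contra h; exact hd (hb' d (by omega))
  have hbd : b ∈ degLE 𝒜 d := fun k hk => hd2 k hk
  have hstar : hmz 𝒜 d b ∈ starSet 𝒜 (P : Set T) :=
    ⟨b, hb, Or.inr ⟨d, hd, hd2, fun j' => coeff_hmz 𝒜 d b j'⟩⟩
  have heq : hmz 𝒜 j b = Polynomial.X ^ (j - d) * hmz 𝒜 d b := by
    rw [← X_pow_mul_hmz 𝒜 hbd (j - d), show d + (j - d) = j by omega]
  rw [heq]
  exact TwoSidedIdeal.mul_mem_left _ _ _ (TwoSidedIdeal.subset_span hstar)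

lemma hmz_Pcan_mem_span {x : T} {n : ℕ} (hx : x ∈ Pcan 𝒜 P n) :
    hmz 𝒜 n x ∈ TwoSidedIdeal.span (starSet 𝒜 (P : Set T)) := by
  induction hx using AddSubgroup.closure_induction with
  | mem y hy =>
    obtain ⟨i, j, k, hn, a, ha, b, hb, c, hc, rfl⟩ := hy
    subst hn
    rw [hmz_mul 𝒜 (degLE_mul 𝒜 ha hb.2) hc, hmz_mul 𝒜 ha hb.2]
    exact TwoSidedIdeal.mul_mem_right _ _ _
      (TwoSidedIdeal.mul_mem_left _ _ _ (hmz_mem_span_of_mem_P 𝒜 P hb.1 hb.2))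
  | zero => rw [hmz_zero]; exact zero_mem _
  | add y z _ _ hy hz => rw [hmz_add]; exact add_mem hy hz
  | neg y _ hy => rw [hmz_neg]; exact neg_mem hy

lemma dh_X_mul_K {f : Polynomial T} (hf : ∀ n, dh 𝒜 n f ∈ Pcan 𝒜 P n) :
    ∀ n, dh 𝒜 n (Polynomial.X * f) ∈ Pcan 𝒜 P n
  | 0 => by rw [dh_zero_X_mul]; exact zero_mem _
  | (n + 1) => by rw [dh_X_mul_succ]; exact Pcan_mono 𝒜 P (by omega) (hf n)

lemma dh_mul_X_K {f : Polynomial T} (hf : ∀ n, dh 𝒜 n f ∈ Pcan 𝒜 P n) :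
    ∀ n, dh 𝒜 n (f * Polynomial.X) ∈ Pcan 𝒜 P n
  | 0 => by rw [dh_zero_mul_X]; exact zero_mem _
  | (n + 1) => by rw [dh_mul_X_succ]; exact Pcan_mono 𝒜 P (by omega) (hf n)

lemma dh_X_pow_mul_K {f : Polynomial T} (hf : ∀ n, dh 𝒜 n f ∈ Pcan 𝒜 P n) (m : ℕ) :
    ∀ n, dh 𝒜 n (Polynomial.X ^ m * f) ∈ Pcan 𝒜 P n := by
  induction m with
  | zero => simpa using hf
  | succ m ih =>
    have : Polynomial.X ^ (m + 1) * f = Polynomial.X * (Polynomial.X ^ m * f) := by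
      rw [← mul_assoc, ← pow_succ']
    rw [this]
    exact dh_X_mul_K 𝒜 P ih

lemma dh_mul_X_pow_K {f : Polynomial T} (hf : ∀ n, dh 𝒜 n f ∈ Pcan 𝒜 P n) (m : ℕ) :
    ∀ n, dh 𝒜 n (f * Polynomial.X ^ m) ∈ Pcan 𝒜 P n := by
  induction m with
  | zero => simpa using hf
  | succ m ih =>
    have : f * Polynomial.X ^ (m + 1) = (f * Polynomial.X ^ m) * Polynomial.X := by
      rw [mul_assoc, ← pow_succ]
    rw [this]
    exact dh_mul_X_K 𝒜 P ih

lemma dh_C_mul_K {t : T} {f : Polynomial T} (hf : ∀ n, dh 𝒜 n f ∈ Pcan 𝒜 P n) :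
    ∀ n, dh 𝒜 n (Polynomial.C t * f) ∈ Pcan 𝒜 P n := by
  intro n
  obtain ⟨s, hs⟩ := exists_mem_degLE 𝒜 t
  have ht : Polynomial.C t = ∑ a ∈ Finset.range (s + 1), Polynomial.C (projFun 𝒜 a t) := by
    rw [← map_sum, sum_projFun 𝒜 hs]
  rw [ht, Finset.sum_mul, dh_sum]
  refine AddSubgroup.sum_mem _ fun a _ => ?_
  rw [dh_C_mul_mem 𝒜 (projFun_mem 𝒜 a t)]
  by_cases han : a ≤ n
  · rw [if_pos han]
    have := degLE_mul_Pcan 𝒜 P (projFun_mem_degLE 𝒜 a t) (hf (n - a))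
    rwa [show a + (n - a) = n by omega] at this
  · rw [if_neg han]; exact zero_mem _

lemma dh_mul_C_K {t : T} {f : Polynomial T} (hf : ∀ n, dh 𝒜 n f ∈ Pcan 𝒜 P n) :
    ∀ n, dh 𝒜 n (f * Polynomial.C t) ∈ Pcan 𝒜 P n := by
  intro n
  obtain ⟨s, hs⟩ := exists_mem_degLE 𝒜 t
  have ht : Polynomial.C t = ∑ a ∈ Finset.range (s + 1), Polynomial.C (projFun 𝒜 a t) := by
    rw [← map_sum, sum_projFun 𝒜 hs]
  rw [ht, Finset.mul_sum, dh_sum]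
  refine AddSubgroup.sum_mem _ fun a _ => ?_
  rw [dh_mul_C_mem 𝒜 (projFun_mem 𝒜 a t)]
  by_cases han : a ≤ n
  · rw [if_pos han]
    have := Pcan_mul_degLE 𝒜 P (projFun_mem_degLE 𝒜 a t) (hf (n - a))
    rwa [show (n - a) + a = n by omega] at this
  · rw [if_neg han]; exact zero_mem _

lemma dh_mul_left_K {f : Polynomial T} (hf : ∀ n, dh 𝒜 n f ∈ Pcan 𝒜 P n)
    (g : Polynomial T) : ∀ n, dh 𝒜 n (g * f) ∈ Pcan 𝒜 P n := by
  induction g using Polynomial.induction_on' with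
  | add p q hp hq =>
    intro n
    rw [add_mul, dh_add]
    exact add_mem (hp n) (hq n)
  | monomial e t =>
    have heq : (Polynomial.monomial e t : Polynomial T) * f
        = Polynomial.C t * (Polynomial.X ^ e * f) := by
      rw [← mul_assoc, Polynomial.C_mul_X_pow_eq_monomial]
    rw [heq]
    exact dh_C_mul_K 𝒜 P (dh_X_pow_mul_K 𝒜 P hf e)

lemma dh_mul_right_K {f : Polynomial T} (hf : ∀ n, dh 𝒜 n f ∈ Pcan 𝒜 P n)
    (g : Polynomial T) : ∀ n, dh 𝒜 n (f * g) ∈ Pcan 𝒜 P n := by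
  induction g using Polynomial.induction_on' with
  | add p q hp hq =>
    intro n
    rw [mul_add, dh_add]
    exact add_mem (hp n) (hq n)
  | monomial e t =>
    have heq : f * (Polynomial.monomial e t : Polynomial T)
        = (f * Polynomial.C t) * Polynomial.X ^ e := by
      rw [mul_assoc, Polynomial.C_mul_X_pow_eq_monomial]  -- monomial e t = C t * X^e
    rw [heq]
    exact dh_mul_X_pow_K 𝒜 P (dh_mul_C_K 𝒜 P hf) e

lemma dh_span_mem_Pcan {f : Polynomial T}
    (hf : f ∈ TwoSidedIdeal.span (starSet 𝒜 (P : Set T))) (n : ℕ) :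
    dh 𝒜 n f ∈ Pcan 𝒜 P n := by
  classical
  let K : TwoSidedIdeal (Polynomial T) := TwoSidedIdeal.mk'
    {f | ∀ n, dh 𝒜 n f ∈ Pcan 𝒜 P n}
    (fun n => by rw [dh_zero]; exact zero_mem _)
    (fun {x y} hx hy n => by rw [dh_add]; exact add_mem (hx n) (hy n))
    (fun {x} hx n => by rw [dh_neg]; exact neg_mem (hx n))
    (fun {x y} hy => dh_mul_left_K 𝒜 P hy x)
    (fun {x y} hx => dh_mul_right_K 𝒜 P hx y)
  have hsub : starSet 𝒜 (P : Set T) ⊆ (K : Set (Polynomial T)) := by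
    intro g hg
    rw [SetLike.mem_coe]
    show g ∈ K
    rw [TwoSidedIdeal.mem_mk']
    obtain ⟨b, hbP, hb⟩ := hg
    rcases hb with ⟨hb0, hg0⟩ | ⟨d, hd1, hd2, hcoeff⟩
    · intro n; rw [hg0, dh_zero]; exact zero_mem _
    · have hgeq : g = hmz 𝒜 d b := by
        ext j'
        rw [hcoeff j', coeff_hmz]
      have hbd : b ∈ degLE 𝒜 d := fun k hk => hd2 k hk
      intro n
      rcases eq_or_ne n d with rfl | hne
      · rw [hgeq, dh_hmz 𝒜 hbd]
        exact mem_Pcan_of_mem_P 𝒜 P hbP hbd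
      · rw [hgeq, dh_of_TzDeg_ne 𝒜 (hmz_mem_TzDeg 𝒜 d b) hne]
        exact zero_mem _
  have hK : f ∈ K := TwoSidedIdeal.mem_span_iff.mp hf K hsub
  rw [TwoSidedIdeal.mem_mk'] at hK
  exact hK n

lemma mem_span_of_dh {f : Polynomial T}
    (hf : ∀ n, dh 𝒜 n f ∈ Pcan 𝒜 P n) :
    f ∈ TwoSidedIdeal.span (starSet 𝒜 (P : Set T)) := by
  classical
  have hBex : ∃ B, ∀ j, f.coeff j ∈ degLE 𝒜 B := by
    choose g hg using fun j => exists_mem_degLE 𝒜 (f.coeff j)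
    refine ⟨(Finset.range (f.natDegree + 1)).sup g, fun j => ?_⟩
    by_cases hj : j ≤ f.natDegree
    · exact degLE_mono 𝒜 (Finset.le_sup (by rw [Finset.mem_range]; omega)) (hg j)
    · rw [Polynomial.coeff_eq_zero_of_natDegree_lt (by omega)]; exact zero_mem _
  obtain ⟨B, hB⟩ := hBex
  set N := f.natDegree + B with hN
  have hfeq : f = ∑ n ∈ Finset.range (N + 1), hmz 𝒜 n (dh 𝒜 n f) := by
    ext j
    rw [Polynomial.finset_sum_coeff,
      Finset.sum_congr rfl (fun n _ => coeff_hmz_dh 𝒜 n f j)]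
    symm
    by_cases hjN : j ≤ N
    · have hu : f.coeff j ∈ degLE 𝒜 (N - j) := by
        by_cases hj : j ≤ f.natDegree
        · exact degLE_mono 𝒜 (by omega) (hB j)
        · rw [Polynomial.coeff_eq_zero_of_natDegree_lt (by omega)]; exact zero_mem _
      calc ∑ n ∈ Finset.range (N + 1), (if j ≤ n then projFun 𝒜 (n - j) (f.coeff j) else 0)
          = ∑ n ∈ Finset.Ico j (N + 1),
              (if j ≤ n then projFun 𝒜 (n - j) (f.coeff j) else 0) := by
            refine (Finset.sum_subset ?_ ?_).symm
            · intro n hn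
              rw [Finset.mem_Ico] at hn
              rw [Finset.mem_range]; omega
            · intro n hn hn'
              rw [Finset.mem_range] at hn
              rw [Finset.mem_Ico] at hn'
              rw [if_neg (by omega)]
        _ = ∑ t ∈ Finset.range (N + 1 - j), projFun 𝒜 t (f.coeff j) := by
            rw [Finset.sum_Ico_eq_sum_range]
            exact Finset.sum_congr rfl fun t _ => by
              rw [if_pos (by omega), show j + t - j = t by omega]
        _ = f.coeff j := by
            rw [show N + 1 - j = (N - j) + 1 by omega]
            exact sum_projFun 𝒜 hu
    · rw [Finset.sum_eq_zero, Polynomial.coeff_eq_zero_of_natDegree_lt (by omega)]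
      intro n hn
      rw [Finset.mem_range] at hn
      rw [if_neg (by omega)]
  rw [hfeq]
  exact sum_mem fun n _ => hmz_Pcan_mem_span 𝒜 P (hf n)

end Aux4


section Aux5

variable (𝒜 : ℕ → AddSubgroup T) [GradedRing 𝒜] (P : AddSubgroup T)

lemma Pcan_descend
    (hJ : ∀ n, ((Pcan 𝒜 P (n + 1) : Set T) ∩ (degLE 𝒜 n : Set T) ⊆ (Pcan 𝒜 P n : Set T)))
    {x : T} {d : ℕ} (hxd : x ∈ degLE 𝒜 d) :
    ∀ r, x ∈ Pcan 𝒜 P (d + r) → x ∈ Pcan 𝒜 P d := by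
  intro r
  induction r with
  | zero => exact fun h => h
  | succ r ih =>
    intro h
    refine ih (hJ (d + r) ⟨?_, degLE_mono 𝒜 (by omega) hxd⟩)
    rwa [show d + (r + 1) = (d + r) + 1 by omega] at h

lemma spanP_exists_Pcan {x : T} (hx : x ∈ TwoSidedIdeal.span (P : Set T)) :
    ∃ m, x ∈ Pcan 𝒜 P m := by
  classical
  let U : TwoSidedIdeal T := TwoSidedIdeal.mk'
    {x | ∃ m, x ∈ Pcan 𝒜 P m}
    ⟨0, zero_mem _⟩
    (fun {x y} hx hy => by
      obtain ⟨m1, h1⟩ := hx; obtain ⟨m2, h2⟩ := hy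
      exact ⟨max m1 m2, add_mem (Pcan_mono 𝒜 P (le_max_left _ _) h1)
        (Pcan_mono 𝒜 P (le_max_right _ _) h2)⟩)
    (fun {x} hx => by obtain ⟨m, h⟩ := hx; exact ⟨m, neg_mem h⟩)
    (fun {t y} hy => by
      obtain ⟨m, h⟩ := hy
      obtain ⟨s, hs⟩ := exists_mem_degLE 𝒜 t
      exact ⟨s + m, degLE_mul_Pcan 𝒜 P hs h⟩)
    (fun {y t} hy => by
      obtain ⟨m, h⟩ := hy
      obtain ⟨s, hs⟩ := exists_mem_degLE 𝒜 t
      exact ⟨m + s, Pcan_mul_degLE 𝒜 P hs h⟩)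
  have hsub : (P : Set T) ⊆ (U : Set T) := by
    intro p hp
    rw [SetLike.mem_coe]
    show p ∈ U
    rw [TwoSidedIdeal.mem_mk']
    obtain ⟨s, hs⟩ := exists_mem_degLE 𝒜 p
    exact ⟨s, mem_Pcan_of_mem_P 𝒜 P hp hs⟩
  have hU : x ∈ U := TwoSidedIdeal.mem_span_iff.mp hx U hsub
  rwa [TwoSidedIdeal.mem_mk'] at hU

lemma Pcan_le_spanP {x : T} {m : ℕ} (hx : x ∈ Pcan 𝒜 P m) :
    x ∈ TwoSidedIdeal.span (P : Set T) := by
  induction hx using AddSubgroup.closure_induction with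
  | mem y hy =>
    obtain ⟨i, j, k, hn, a, ha, b, hb, c, hc, rfl⟩ := hy
    exact TwoSidedIdeal.mul_mem_right _ _ _
      (TwoSidedIdeal.mul_mem_left _ _ _ (TwoSidedIdeal.subset_span hb.1))
  | zero => exact zero_mem _
  | add y z _ _ hy hz => exact add_mem hy hz
  | neg y _ hy => exact neg_mem hy

lemma projFun_top_Pcan {x : T} {d : ℕ} (hx : x ∈ Pcan 𝒜 P d) :
    projFun 𝒜 d x ∈ TwoSidedIdeal.span (leadSet 𝒜 (P : Set T)) := by
  induction hx using AddSubgroup.closure_induction with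
  | mem y hy =>
    obtain ⟨i, j, k, hn, a, ha, b, hb, c, hc, rfl⟩ := hy
    subst hn
    rw [projFun_top_mul 𝒜 (degLE_mul 𝒜 ha hb.2) hc, projFun_top_mul 𝒜 ha hb.2]
    by_cases hz : projFun 𝒜 j b = 0
    · rw [hz, mul_zero, zero_mul]
      exact zero_mem _
    · have hlead : projFun 𝒜 j b ∈ leadSet 𝒜 (P : Set T) :=
        ⟨b, hb.1, Or.inr ⟨j, rfl, hz, fun k hk => hb.2 k hk⟩⟩
      exact TwoSidedIdeal.mul_mem_right _ _ _
        (TwoSidedIdeal.mul_mem_left _ _ _ (TwoSidedIdeal.subset_span hlead))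
  | zero => rw [projFun_zero]; exact zero_mem _
  | add y z _ _ hy hz => rw [projFun_add]; exact add_mem hy hz
  | neg y _ hy => rw [projFun_neg]; exact neg_mem hy

lemma mem_R_of_span_lead {y : T}
    (hy : y ∈ TwoSidedIdeal.span (leadSet 𝒜 (P : Set T))) :
    ∀ e, ∃ x', x' ∈ Pcan 𝒜 P e ∧ x' ∈ degLE 𝒜 e ∧ projFun 𝒜 e x' = projFun 𝒜 e y := by
  classical
  let R : TwoSidedIdeal T := TwoSidedIdeal.mk'
    {y | ∀ e, ∃ x', x' ∈ Pcan 𝒜 P e ∧ x' ∈ degLE 𝒜 e ∧ projFun 𝒜 e x' = projFun 𝒜 e y}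
    (fun e => ⟨0, zero_mem _, zero_mem _, rfl⟩)
    (fun {x y} hx hy e => by
      obtain ⟨x1, h1, h1', h1''⟩ := hx e
      obtain ⟨x2, h2, h2', h2''⟩ := hy e
      exact ⟨x1 + x2, add_mem h1 h2, add_mem h1' h2',
        by rw [projFun_add, h1'', h2'', ← projFun_add]⟩)
    (fun {x} hx e => by
      obtain ⟨x1, h1, h1', h1''⟩ := hx e
      exact ⟨-x1, neg_mem h1, neg_mem h1', by rw [projFun_neg, h1'', ← projFun_neg]⟩)
    (fun {t y} hy e => by
      choose w hw using hy
      refine ⟨∑ a ∈ Finset.range (e + 1), projFun 𝒜 a t * w (e - a), ?_, ?_, ?_⟩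
      · refine AddSubgroup.sum_mem _ fun a ha => ?_
        rw [Finset.mem_range] at ha
        have := degLE_mul_Pcan 𝒜 P (projFun_mem_degLE 𝒜 a t) (hw (e - a)).1
        rwa [show a + (e - a) = e by omega] at this
      · refine AddSubgroup.sum_mem _ fun a ha => ?_
        rw [Finset.mem_range] at ha
        have := degLE_mul 𝒜 (projFun_mem_degLE 𝒜 a t) (hw (e - a)).2.1
        exact degLE_mono 𝒜 (by omega) this
      · rw [projFun_sum, projFun_mul_expand_left 𝒜 t y e]
        refine Finset.sum_congr rfl fun a ha => ?_
        rw [Finset.mem_range] at ha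
        rw [projFun_mul_left_mem 𝒜 (projFun_mem 𝒜 a t) _ e, if_pos (by omega),
          (hw (e - a)).2.2])
    (fun {y t} hy e => by
      choose w hw using hy
      refine ⟨∑ a ∈ Finset.range (e + 1), w (e - a) * projFun 𝒜 a t, ?_, ?_, ?_⟩
      · refine AddSubgroup.sum_mem _ fun a ha => ?_
        rw [Finset.mem_range] at ha
        have := Pcan_mul_degLE 𝒜 P (projFun_mem_degLE 𝒜 a t) (hw (e - a)).1
        rwa [show (e - a) + a = e by omega] at this
      · refine AddSubgroup.sum_mem _ fun a ha => ?_
        rw [Finset.mem_range] at ha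
        have := degLE_mul 𝒜 (hw (e - a)).2.1 (projFun_mem_degLE 𝒜 a t)
        exact degLE_mono 𝒜 (by omega) this
      · rw [projFun_sum, projFun_mul_expand_right 𝒜 t y e]
        refine Finset.sum_congr rfl fun a ha => ?_
        rw [Finset.mem_range] at ha
        rw [projFun_mul_right_mem 𝒜 (projFun_mem 𝒜 a t) _ e, if_pos (by omega),
          (hw (e - a)).2.2])
  have hsub : leadSet 𝒜 (P : Set T) ⊆ (R : Set T) := by
    rintro y ⟨b, hbP, hb⟩
    rw [SetLike.mem_coe]
    show y ∈ R
    rw [TwoSidedIdeal.mem_mk']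
    rcases hb with ⟨hb0, hy0⟩ | ⟨m, hym, hyne, htop⟩
    · intro e
      exact ⟨0, zero_mem _, zero_mem _, by rw [hy0, projFun_zero]⟩
    · intro e
      have hbm : b ∈ degLE 𝒜 m := fun k hk => htop k hk
      rcases eq_or_ne e m with rfl | hne
      · exact ⟨b, mem_Pcan_of_mem_P 𝒜 P hbP hbm, hbm,
          by rw [hym, projFun_projFun, if_pos rfl]⟩
      · refine ⟨0, zero_mem _, zero_mem _, ?_⟩
        rw [projFun_zero, hym, projFun_projFun, if_neg (Ne.symm hne)]
  have hR : y ∈ R := TwoSidedIdeal.mem_span_iff.mp hy R hsub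
  rwa [TwoSidedIdeal.mem_mk'] at hR

lemma J_of_PBW
    (hPBW : leadSet 𝒜 ((TwoSidedIdeal.span (P : Set T) : TwoSidedIdeal T) : Set T)
      ⊆ (TwoSidedIdeal.span (leadSet 𝒜 (P : Set T)) : Set T)) (n : ℕ) :
    (Pcan 𝒜 P (n + 1) : Set T) ∩ (degLE 𝒜 n : Set T) ⊆ (Pcan 𝒜 P n : Set T) := by
  have main : ∀ d, ∀ x, x ∈ Pcan 𝒜 P (n + 1) → x ∈ degLE 𝒜 d → d ≤ n → x ∈ Pcan 𝒜 P n := by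
    intro d
    induction d using Nat.strong_induction_on with
    | _ d ih =>
      intro x hx hxd hdn
      by_cases hx0 : x = 0
      · subst hx0; exact zero_mem _
      obtain ⟨e, he1, he2⟩ := exists_top 𝒜 hx0
      have hed : e ≤ d := by by_contra h; exact he1 (hxd e (by omega))
      have hxspan : x ∈ TwoSidedIdeal.span (P : Set T) := Pcan_le_spanP 𝒜 P hx
      have hylead : projFun 𝒜 e x ∈ leadSet 𝒜 ((TwoSidedIdeal.span (P : Set T) :
          TwoSidedIdeal T) : Set T) := ⟨x, hxspan, Or.inr ⟨e, rfl, he1, he2⟩⟩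
      obtain ⟨x', hx'P, hx'd, hx'e⟩ := mem_R_of_span_lead 𝒜 P (hPBW hylead) e
      have hx'e' : projFun 𝒜 e x' = projFun 𝒜 e x := by
        rw [hx'e, projFun_projFun, if_pos rfl]
      have hsub : ∀ k, e ≤ k → projFun 𝒜 k (x - x') = 0 := by
        intro k hk
        rw [sub_eq_add_neg, projFun_add, projFun_neg]
        rcases eq_or_lt_of_le hk with rfl | hlt
        · rw [hx'e', add_neg_cancel]
        · rw [he2 k hlt, hx'd k (by omega), neg_zero, add_zero]
      cases e with
      | zero =>
        have h0 : x - x' = 0 := eq_zero_of_forall_projFun 𝒜 (fun k => hsub k (by omega))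
        have hxx : x = x' := by rwa [sub_eq_zero] at h0
        rw [hxx]
        exact Pcan_mono 𝒜 P (by omega) hx'P
      | succ e' =>
        have hxx'd : x - x' ∈ degLE 𝒜 e' := fun k hk => hsub k (by omega)
        have hxx'P : x - x' ∈ Pcan 𝒜 P (n + 1) :=
          sub_mem hx (Pcan_mono 𝒜 P (by omega) hx'P)
        have hrec := ih e' (by omega) (x - x') hxx'P hxx'd (by omega)
        have hx'n : x' ∈ Pcan 𝒜 P n := Pcan_mono 𝒜 P (by omega) hx'P
        have hxeq : x = (x - x') + x' := by abel
        rw [hxeq]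
        exact add_mem hrec hx'n
  intro x hx
  exact main n x hx.1 hx.2 le_rfl

lemma PBW_of_J
    (hJ : ∀ n, ((Pcan 𝒜 P (n + 1) : Set T) ∩ (degLE 𝒜 n : Set T) ⊆ (Pcan 𝒜 P n : Set T))) :
    leadSet 𝒜 ((TwoSidedIdeal.span (P : Set T) : TwoSidedIdeal T) : Set T)
      ⊆ (TwoSidedIdeal.span (leadSet 𝒜 (P : Set T)) : Set T) := by
  rintro y ⟨x, hx, hLH⟩
  rw [SetLike.mem_coe] at hx ⊢
  rcases hLH with ⟨hx0, hy0⟩ | ⟨d, hyd, hyne, htop⟩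
  · rw [hy0]; exact zero_mem _
  · have hxd : x ∈ degLE 𝒜 d := fun k hk => htop k hk
    obtain ⟨m, hm⟩ := spanP_exists_Pcan 𝒜 P hx
    have hxPd : x ∈ Pcan 𝒜 P d := by
      rcases le_or_gt m d with h | h
      · exact Pcan_mono 𝒜 P h hm
      · exact Pcan_descend 𝒜 P hJ hxd (m - d)
          (by rwa [show d + (m - d) = m by omega])
    rw [hyd]
    exact projFun_top_Pcan 𝒜 P hxPd

end Aux5

/-- Theorem 2.19 (and Theorem 2.21): the Jacobi condition `(J_n)` holds iff the degree-`n`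
component of the annihilator of `z` in `D(P) = T[z]/⟨P*⟩` vanishes; in particular `P` is of
`PBW`-type iff `z` is regular in `D(P)`. -/
theorem stmt_16 (𝒜 : ℕ → AddSubgroup T) [GradedRing 𝒜]
    (P : AddSubgroup T) (hP : IsSubbimodule 𝒜 P) :
    (∀ n, ((Pcan 𝒜 P (n + 1) : Set T) ∩ (degLE 𝒜 n : Set T) ⊆ (Pcan 𝒜 P n : Set T))
        ↔ ∀ f ∈ TzDeg 𝒜 n,
            Polynomial.X * f ∈ TwoSidedIdeal.span (starSet 𝒜 (P : Set T)) →
              f ∈ TwoSidedIdeal.span (starSet 𝒜 (P : Set T))) ∧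
      ((leadSet 𝒜 (TwoSidedIdeal.span (P : Set T) : Set T)
            ⊆ (TwoSidedIdeal.span (leadSet 𝒜 (P : Set T)) : Set T))
        ↔ ∀ f : Polynomial T,
            Polynomial.X * f ∈ TwoSidedIdeal.span (starSet 𝒜 (P : Set T)) →
              f ∈ TwoSidedIdeal.span (starSet 𝒜 (P : Set T))) := by
  constructor
  · intro n
    constructor
    · intro hJ f hf hXf
      have h1 : dh 𝒜 n f ∈ Pcan 𝒜 P (n + 1) := by
        have := dh_span_mem_Pcan 𝒜 P hXf (n + 1)
        rwa [dh_X_mul_succ] at this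
      have h2 : dh 𝒜 n f ∈ Pcan 𝒜 P n := hJ ⟨h1, dh_mem_degLE 𝒜 n f⟩
      have h3 := hmz_Pcan_mem_span 𝒜 P h2
      rwa [hmz_dh_of_TzDeg 𝒜 hf] at h3
    · intro hA x hx
      obtain ⟨hx1, hx2⟩ := hx
      rw [SetLike.mem_coe] at hx1 hx2 ⊢
      have hXf : Polynomial.X * hmz 𝒜 n x ∈ TwoSidedIdeal.span (starSet 𝒜 (P : Set T)) := by
        rw [← X_mul_hmz 𝒜 hx2]
        exact hmz_Pcan_mem_span 𝒜 P (Pcan_mono 𝒜 P le_rfl hx1)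
      have hfI := hA _ (hmz_mem_TzDeg 𝒜 n x) hXf
      have h2 := dh_span_mem_Pcan 𝒜 P hfI n
      rwa [dh_hmz 𝒜 hx2] at h2
  · constructor
    · intro hPBW f hXf
      have hJ := fun n => J_of_PBW 𝒜 P hPBW n
      refine mem_span_of_dh 𝒜 P fun n => ?_
      have h1 := dh_span_mem_Pcan 𝒜 P hXf (n + 1)
      rw [dh_X_mul_succ] at h1
      exact hJ n ⟨h1, dh_mem_degLE 𝒜 n f⟩
    · intro hreg
      apply PBW_of_J 𝒜 P
      intro n x hx
      obtain ⟨hx1, hx2⟩ := hx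
      rw [SetLike.mem_coe] at hx1 hx2 ⊢
      have hXf : Polynomial.X * hmz 𝒜 n x ∈ TwoSidedIdeal.span (starSet 𝒜 (P : Set T)) := by
        rw [← X_mul_hmz 𝒜 hx2]
        exact hmz_Pcan_mem_span 𝒜 P hx1
      have hfI := hreg _ hXf
      have h2 := dh_span_mem_Pcan 𝒜 P hfI n
      rwa [dh_hmz 𝒜 hx2] at h2
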